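/- arXiv:1708.03199 — 3 statements merged into one kernel-verified Lean document; each statement's English description precedes it below -/
import Mathlib

section
/- Let R be a commutative ring and f ∈ R. Then Min(R) ∩ D(f) is a clopen (both closed and open) subset of Min(R), where Min(R) carries the subspace topology induced from the Zariski topology on Spec(R). -/
/-!
If `p` is a minimal prime, `R_p` has a single prime ideal, so `f ∈ p` exactly when `f` is
nilpotent in `R_p`, i.e. when `s * f ^ n = 0` for some `s ∉ p`. Hence on `Min(R)` the open set
`D(f)` agrees with the closed set `V({s | ∃ n, s * f ^ n = 0})`.
-/

theorem Ideal.exists_mul_pow_eq_zero_of_mem_minimalPrimes {R : Type*} [CommSemiring R]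
    {p : Ideal R} (hp : p ∈ minimalPrimes R) {f : R} (hf : f ∈ p) :
    ∃ s ∉ p, ∃ n : ℕ, s * f ^ n = 0 := by
  have := hp.1.1
  have := Ring.KrullDimLE.of_isLocalization p hp (Localization.AtPrime p)
  obtain ⟨n, hn⟩ : IsNilpotent (algebraMap R (Localization.AtPrime p) f) :=
    Ring.KrullDimLE.isNilpotent_iff_mem_maximalIdeal.2
      ((IsLocalization.AtPrime.to_map_mem_maximal_iff _ p f).2 hf)
  rw [← map_pow, IsLocalization.map_eq_zero_iff p.primeCompl] at hn
  obtain ⟨⟨s, hs⟩, hsf⟩ := hn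
  exact ⟨s, hs, n, hsf⟩

theorem Ideal.mem_iff_exists_mul_pow_eq_zero_of_mem_minimalPrimes {R : Type*} [CommSemiring R]
    {p : Ideal R} (hp : p ∈ minimalPrimes R) {f : R} :
    f ∈ p ↔ ∃ s ∉ p, ∃ n : ℕ, s * f ^ n = 0 := by
  refine ⟨exists_mul_pow_eq_zero_of_mem_minimalPrimes hp, ?_⟩
  rintro ⟨s, hs, n, hsf⟩
  exact hp.1.1.mem_of_pow_mem n ((hp.1.1.mem_or_mem (hsf ▸ p.zero_mem)).resolve_left hs)

/-- For a commutative ring `R` and `f ∈ R`, the set `Min(R) ∩ D(f)` is a clopen subset of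
`Min(R)` with the subspace topology induced from the Zariski topology on `Spec R`. -/
theorem stmt2 {R : Type*} [CommRing R] (f : R) :
    IsClopen ((Subtype.val : {p : PrimeSpectrum R // p.asIdeal ∈ minimalPrimes R} →
        PrimeSpectrum R) ⁻¹' (PrimeSpectrum.basicOpen f : Set (PrimeSpectrum R))) := by
  have h : (Subtype.val : {p : PrimeSpectrum R // p.asIdeal ∈ minimalPrimes R} →
        PrimeSpectrum R) ⁻¹' (PrimeSpectrum.basicOpen f : Set (PrimeSpectrum R)) =
      Subtype.val ⁻¹' PrimeSpectrum.zeroLocus {s | ∃ n : ℕ, s * f ^ n = 0} := by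
    ext ⟨p, hp⟩
    simp only [Set.mem_preimage, PrimeSpectrum.mem_basicOpen, PrimeSpectrum.mem_zeroLocus,
      Set.ofPred_subset, SetLike.mem_coe]
    rw [Ideal.mem_iff_exists_mul_pow_eq_zero_of_mem_minimalPrimes hp]
    grind
  exact ⟨h ▸ (PrimeSpectrum.isClosed_zeroLocus _).preimage continuous_subtype_val,
    (PrimeSpectrum.basicOpen f).isOpen.preimage continuous_subtype_val⟩
end

section
/- Let R be a commutative ring. The set Max(R) of maximal ideals of R is compact with respect to the subspace topology induced from the flat topology on Spec(R) if and only if the quotient ring R/J(R) is absolutely flat, where J(R) is the Jacobson radical of R. -/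
/-! Every maximal ideal of `R` contains `a` or some `1 - a x`, so `Max(R)` is covered by the
flat-open sets `V(a (1 - a x))`. Compactness picks finitely many `x₁, …, xₙ`, and then
`a ∏ᵢ (1 - a xᵢ) = a - a² y` lies in every maximal ideal, i.e. in `J(R)`.
Conversely, if `A = R/J(R)` is von Neumann regular and `a = a² b`, then `V(a) = D(1 - a b)` in
`Spec A`, so `Spec A → Spec R` is continuous from the Zariski to the flat topology. Its image is
`V(J(R))`, which is `Max(R)` because every prime of a von Neumann regular ring is maximal; hence
`Max(R)` is the continuous image of the quasi-compact space `Spec A`. -/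

/-- The flat (inverse) topology on `Spec R`: the topology generated by the sub-basis
consisting of the sets `V(f) = {p : f ∈ p}` for `f ∈ R`. -/
def flatTopology (R : Type*) [CommRing R] : TopologicalSpace (PrimeSpectrum R) :=
  TopologicalSpace.generateFrom
    {U : Set (PrimeSpectrum R) | ∃ f : R, U = PrimeSpectrum.zeroLocus {f}}

open PrimeSpectrum Topology

def IsVonNeumannRegular (A : Type*) [CommRing A] : Prop :=
  ∀ a : A, ∃ b, a = a ^ 2 * b

namespace IsVonNeumannRegular

variable {A : Type*} [CommRing A]

lemma mul_one_sub_mul_eq_zero {a b : A} (h : a = a ^ 2 * b) : a * (1 - a * b) = 0 := by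
  linear_combination h

lemma zeroLocus_singleton_eq_basicOpen {a b : A} (h : a = a ^ 2 * b) :
    zeroLocus {a} = (basicOpen (1 - a * b) : Set (PrimeSpectrum A)) := by
  ext p
  simp only [mem_zeroLocus, Set.singleton_subset_iff, SetLike.mem_coe, mem_basicOpen]
  constructor
  · intro ha h1
    exact p.isPrime.one_notMem
      (by simpa using p.asIdeal.add_mem h1 (p.asIdeal.mul_mem_right b ha))
  · intro h1
    have : a * (1 - a * b) ∈ p.asIdeal := by
      rw [mul_one_sub_mul_eq_zero h]
      exact p.asIdeal.zero_mem
    exact (p.isPrime.mem_or_mem this).resolve_right h1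

lemma isOpen_zeroLocus_singleton (hA : IsVonNeumannRegular A) (a : A) :
    IsOpen (zeroLocus {a} : Set (PrimeSpectrum A)) := by
  obtain ⟨b, hb⟩ := hA a
  rw [zeroLocus_singleton_eq_basicOpen hb]
  exact (basicOpen _).isOpen

lemma isMaximal_of_isPrime (hA : IsVonNeumannRegular A) (p : Ideal A) [hp : p.IsPrime] :
    p.IsMaximal := by
  refine Ideal.isMaximal_iff.2 ⟨hp.one_notMem, fun I a hpI ha haI => ?_⟩
  obtain ⟨b, hb⟩ := hA a
  have h1 : 1 - a * b ∈ p := by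
    have : a * (1 - a * b) ∈ p := by
      rw [mul_one_sub_mul_eq_zero hb]
      exact p.zero_mem
    exact (hp.mem_or_mem this).resolve_left ha
  simpa using I.add_mem (hpI h1) (I.mul_mem_right b haI)

lemma continuous_comap_flatTopology {R : Type*} [CommRing R] (hA : IsVonNeumannRegular A)
    (f : R →+* A) : Continuous[_, flatTopology R] (comap f) := by
  rw [flatTopology, continuous_generateFrom_iff]
  rintro _ ⟨r, rfl⟩
  rw [preimage_comap_zeroLocus, Set.image_singleton]
  exact hA.isOpen_zeroLocus_singleton (f r)

end IsVonNeumannRegular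

section

variable {R : Type*} [CommRing R]

lemma isOpen_flatTopology_zeroLocus_singleton (f : R) :
    IsOpen[flatTopology R] (zeroLocus {f}) :=
  TopologicalSpace.GenerateOpen.basic _ ⟨f, rfl⟩

lemma range_comap_mk_eq_setOf_isMaximal {I : Ideal R} (hI : I ≤ Ring.jacobson R)
    (hreg : IsVonNeumannRegular (R ⧸ I)) :
    Set.range (comap (Ideal.Quotient.mk I)) = {p | p.asIdeal.IsMaximal} := by
  ext p
  constructor
  · rintro ⟨q, rfl⟩
    have := hreg.isMaximal_of_isPrime q.asIdeal
    exact Ideal.comap_isMaximal_of_surjective _ Ideal.Quotient.mk_surjective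
  · intro hp
    have : p.asIdeal.IsMaximal := hp
    rw [range_comap_of_surjective _ _ Ideal.Quotient.mk_surjective, Ideal.mk_ker]
    exact hI.trans (Ring.jacobson_le_of_isMaximal p.asIdeal)

lemma setOf_isMaximal_subset_iUnion_zeroLocus (a : R) :
    {p : PrimeSpectrum R | p.asIdeal.IsMaximal} ⊆ ⋃ x, zeroLocus {a * (1 - a * x)} := by
  intro p hp
  rw [Set.mem_iUnion]
  by_cases ha : a ∈ p.asIdeal
  · exact ⟨0, by simpa using ha⟩
  · obtain ⟨x, i, hi, hxi⟩ := (hp : p.asIdeal.IsMaximal).exists_inv ha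
    refine ⟨x, ?_⟩
    have : a * (1 - a * x) = a * i := by linear_combination -a * hxi
    simpa [this] using p.asIdeal.mul_mem_left a hi

lemma exists_prod_one_sub_mul_eq (a : R) (s : Finset R) :
    ∃ y, ∏ x ∈ s, (1 - a * x) = 1 - a * y :=
  Finset.prod_induction _ (fun z => ∃ y, z = 1 - a * y)
    (fun _ _ ⟨y, hy⟩ ⟨y', hy'⟩ => ⟨y + y' - a * y * y', by rw [hy, hy']; ring⟩)
    ⟨0, by simp⟩ (fun x _ => ⟨x, rfl⟩)

lemma exists_sub_sq_mul_mem_jacobson_of_isCompact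
    (hc : @IsCompact _ (flatTopology R) {p : PrimeSpectrum R | p.asIdeal.IsMaximal}) (a : R) :
    ∃ y, a - a ^ 2 * y ∈ Ring.jacobson R := by
  obtain ⟨t, ht⟩ := @IsCompact.elim_finite_subcover _ (flatTopology R) _ _ hc _
    (fun _ => isOpen_flatTopology_zeroLocus_singleton _) (setOf_isMaximal_subset_iUnion_zeroLocus a)
  obtain ⟨y, hy⟩ := exists_prod_one_sub_mul_eq a t
  refine ⟨y, ?_⟩
  rw [Ring.jacobson_eq_sInf_isMaximal, Ideal.mem_sInf]
  intro m hm
  obtain ⟨x, hxt, hx⟩ := Set.mem_iUnion₂.1 (ht (a := ⟨m, hm.isPrime⟩) hm)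
  have hdvd : a * (1 - a * x) ∣ a - a ^ 2 * y := by
    rw [show a - a ^ 2 * y = a * (1 - a * y) by ring, ← hy]
    exact mul_dvd_mul_left a (Finset.dvd_prod_of_mem _ hxt)
  exact Ideal.mem_of_dvd _ hdvd (by simpa using hx)

lemma isVonNeumannRegular_quotient_jacobson_of_isCompact
    (hc : @IsCompact _ (flatTopology R) {p : PrimeSpectrum R | p.asIdeal.IsMaximal}) :
    IsVonNeumannRegular (R ⧸ Ring.jacobson R) := by
  intro a
  obtain ⟨a, rfl⟩ := Ideal.Quotient.mk_surjective a
  obtain ⟨y, hy⟩ := exists_sub_sq_mul_mem_jacobson_of_isCompact hc a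
  exact ⟨Ideal.Quotient.mk _ y, by rwa [← map_pow, ← map_mul, Ideal.Quotient.eq]⟩

lemma isCompact_setOf_isMaximal_of_isVonNeumannRegular
    (hreg : IsVonNeumannRegular (R ⧸ Ring.jacobson R)) :
    @IsCompact _ (flatTopology R) {p : PrimeSpectrum R | p.asIdeal.IsMaximal} := by
  rw [← range_comap_mk_eq_setOf_isMaximal le_rfl hreg]
  exact @isCompact_range _ _ _ (flatTopology R) _ _ (hreg.continuous_comap_flatTopology _)

end

/-- The maximal spectrum of a commutative ring `R` is compact with respect to the flat
topology if and only if `R / J(R)` is absolutely flat (von Neumann regular), where `J(R)`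
is the Jacobson radical of `R`. -/
theorem stmt6 (R : Type*) [CommRing R] :
    @IsCompact _ (flatTopology R) {p : PrimeSpectrum R | p.asIdeal.IsMaximal} ↔
      ∀ a : R ⧸ (⊥ : Ideal R).jacobson, ∃ b, a = a ^ 2 * b := by
  rw [Ideal.jacobson_bot]
  exact ⟨isVonNeumannRegular_quotient_jacobson_of_isCompact,
    isCompact_setOf_isMaximal_of_isVonNeumannRegular⟩
end

section
/- Let R be a commutative ring. Then Spec(R) is a Noetherian topological space with respect to the Zariski topology if and only if the collection of open subsets of Spec(R) in the flat topology is stable under arbitrary intersections (i.e., every intersection of a family of flat-open subsets of Spec(R) is flat-open). -/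
open Topology TopologicalSpace

namespace TopologicalSpace

variable {X : Type*} [TopologicalSpace X]

theorem Opens.exists_maximal_not_isCompact {U : Opens X} (hU : ¬IsCompact (U : Set X)) :
    ∃ V : Opens X, U ≤ V ∧ Maximal (fun W : Opens X => ¬IsCompact (W : Set X)) V := by
  refine zorn_le_nonempty₀ _ (fun c hc hchain W hW => ⟨sSup c, ?_, fun V hV => le_sSup hV⟩) U hU
  intro hcompact
  have : Nonempty c := ⟨⟨W, hW⟩⟩
  obtain ⟨V, hV⟩ := hcompact.elim_directed_cover (fun V : c => (V : Set X)) (fun V => V.1.isOpen)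
    (by simp [Opens.coe_sSup]) hchain.directedOn.directed_val
  have hsSup : sSup c = V := le_antisymm hV (le_sSup V.2)
  exact hc V.2 (hsSup ▸ hcompact)

theorem Opens.isIrreducible_compl_of_maximal_not_isCompact
    [CompactSpace X] [QuasiSeparatedSpace X] {U : Opens X}
    (hU : Maximal (fun W : Opens X => ¬IsCompact (W : Set X)) U) :
    IsIrreducible (U : Set X)ᶜ := by
  refine ⟨?_, isPreirreducible_iff_isClosed_union_isClosed.mpr fun Z₁ Z₂ hZ₁ hZ₂ hsub => ?_⟩
  · rw [Set.nonempty_compl]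
    rintro hU'
    exact hU.1 (hU' ▸ isCompact_univ)
  · by_contra! h
    have hcompact {Z : Set X} (hZ : IsClosed Z) (hUZ : ¬(U : Set X)ᶜ ⊆ Z) :
        IsCompact ((U : Set X) ∪ Zᶜ) := by
      by_contra hnc
      have hle : U ⊔ ⟨Zᶜ, hZ.isOpen_compl⟩ ≤ U := hU.2 hnc le_sup_left
      exact hUZ (Set.compl_subset_comm.mp (sup_le_iff.mp hle).2)
    have hinter : (U : Set X) = ((U : Set X) ∪ Z₁ᶜ) ∩ ((U : Set X) ∪ Z₂ᶜ) := by
      rw [← Set.union_inter_distrib_left, ← Set.compl_union, eq_comm, Set.union_eq_left]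
      exact Set.compl_subset_comm.mp hsub
    exact hU.1 (hinter ▸ QuasiSeparatedSpace.inter_isCompact _ _
      (U.isOpen.union hZ₁.isOpen_compl) (hcompact hZ₁ h.1)
      (U.isOpen.union hZ₂.isOpen_compl) (hcompact hZ₂ h.2))

theorem noetherianSpace_of_isCompact_closure_singleton_compl
    [CompactSpace X] [QuasiSeparatedSpace X] [QuasiSober X]
    (h : ∀ x : X, IsCompact (closure {x})ᶜ) : NoetherianSpace X := by
  refine (noetherianSpace_iff_opens X).mpr fun U => by_contra fun hU => ?_
  obtain ⟨V, -, hV⟩ := Opens.exists_maximal_not_isCompact hU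
  have hirr := Opens.isIrreducible_compl_of_maximal_not_isCompact hV
  apply hV.1
  rw [← compl_compl (V : Set X), ← hirr.closure_genericPoint V.isOpen.isClosed_compl]
  exact h _

end TopologicalSpace

namespace PrimeSpectrum

variable {R : Type*} [CommRing R]

theorem isUpperSet_of_isOpen_flatTopology {U : Set (PrimeSpectrum R)}
    (hU : IsOpen[flatTopology R] U) : IsUpperSet U := by
  induction hU with
  | basic V hV =>
    obtain ⟨f, rfl⟩ := hV
    intro p q hpq hp
    rw [mem_zeroLocus] at hp ⊢
    exact hp.trans hpq
  | univ => exact isUpperSet_univ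
  | inter V W _ _ hV hW => exact hV.inter hW
  | sUnion S _ hS => exact isUpperSet_sUnion hS

theorem isOpen_flatTopology_zeroLocus_finset (t : Finset R) :
    IsOpen[flatTopology R] (zeroLocus (t : Set R)) := by
  classical
  induction t using Finset.induction_on with
  | empty => simp
  | insert a t _ ht =>
    rw [Finset.coe_insert, Set.insert_eq, zeroLocus_union]
    exact GenerateOpen.inter _ _ (GenerateOpen.basic _ ⟨a, rfl⟩) ht

theorem exists_finset_mem_zeroLocus_subset_of_isOpen_flatTopology {U : Set (PrimeSpectrum R)}
    (hU : IsOpen[flatTopology R] U) {p : PrimeSpectrum R} (hp : p ∈ U) :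
    ∃ t : Finset R, p ∈ zeroLocus (t : Set R) ∧ zeroLocus (t : Set R) ⊆ U := by
  classical
  induction hU generalizing p with
  | basic V hV =>
    obtain ⟨f, rfl⟩ := hV
    exact ⟨{f}, by simpa using hp, by simp⟩
  | univ => exact ⟨∅, by simp, Set.subset_univ _⟩
  | inter V W _ _ hV hW =>
    obtain ⟨t₁, hp₁, ht₁⟩ := hV hp.1
    obtain ⟨t₂, hp₂, ht₂⟩ := hW hp.2
    refine ⟨t₁ ∪ t₂, ?_, ?_⟩ <;> rw [Finset.coe_union, zeroLocus_union]
    · exact ⟨hp₁, hp₂⟩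
    · exact Set.inter_subset_inter ht₁ ht₂
  | sUnion S _ hS =>
    obtain ⟨V, hVS, hpV⟩ := hp
    obtain ⟨t, hpt, ht⟩ := hS V hVS hpV
    exact ⟨t, hpt, ht.trans (Set.subset_sUnion_of_mem hVS)⟩

theorem isOpen_flatTopology_of_isClosed [NoetherianSpace (PrimeSpectrum R)]
    {Z : Set (PrimeSpectrum R)} (hZ : IsClosed Z) : IsOpen[flatTopology R] Z := by
  obtain ⟨t, ht⟩ := isCompact_isOpen_iff.mp ⟨NoetherianSpace.isCompact Zᶜ, hZ.isOpen_compl⟩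
  rw [← compl_compl Z, ← ht, compl_compl]
  exact isOpen_flatTopology_zeroLocus_finset t

theorem isOpen_flatTopology_iff_isUpperSet [NoetherianSpace (PrimeSpectrum R)]
    {U : Set (PrimeSpectrum R)} : IsOpen[flatTopology R] U ↔ IsUpperSet U := by
  refine ⟨isUpperSet_of_isOpen_flatTopology, fun hU => ?_⟩
  have hUnion : U = ⋃ p ∈ U, closure {p} := by
    refine Set.Subset.antisymm (fun p hp => Set.mem_biUnion hp (subset_closure (Set.mem_singleton p))) ?_
    simp only [Set.iUnion_subset_iff]
    exact fun p hp q hpq =>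
      hU ((le_iff_specializes p q).mpr (specializes_iff_mem_closure.mpr hpq)) hp
  rw [hUnion]
  exact @isOpen_biUnion _ _ (flatTopology R) _ _
    fun p _ => isOpen_flatTopology_of_isClosed isClosed_closure

theorem isCompact_closure_singleton_compl_of_isOpen_flatTopology {p : PrimeSpectrum R}
    (hp : IsOpen[flatTopology R] (closure {p})) : IsCompact (closure {p})ᶜ := by
  obtain ⟨t, hpt, ht⟩ :=
    exists_finset_mem_zeroLocus_subset_of_isOpen_flatTopology hp (subset_closure rfl)
  have hclosure : closure {p} = zeroLocus (t : Set R) :=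
    subset_antisymm (closure_minimal (by simpa using hpt) (isClosed_zeroLocus _)) ht
  exact (isCompact_isOpen_iff.mpr ⟨t, hclosure ▸ rfl⟩).1

theorem closure_singleton_eq_sInter_zeroLocus (p : PrimeSpectrum R) :
    closure {p} = ⋂₀ ((fun f => zeroLocus {f}) '' (p.asIdeal : Set R)) := by
  rw [Set.sInter_image, ← zeroLocus_iUnion₂, Set.biUnion_of_singleton,
    PrimeSpectrum.closure_singleton]

end PrimeSpectrum

open PrimeSpectrum in
/-- `Spec R` is a Noetherian topological space with respect to the Zariski topology if and
only if the open sets of the flat topology on `Spec R` are stable under arbitrary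
intersections. -/
theorem stmt19 (R : Type*) [CommRing R] :
    TopologicalSpace.NoetherianSpace (PrimeSpectrum R) ↔
      ∀ S : Set (Set (PrimeSpectrum R)),
        (∀ U ∈ S, @IsOpen _ (flatTopology R) U) → @IsOpen _ (flatTopology R) (⋂₀ S) := by
  constructor
  · intro _ S hS
    exact isOpen_flatTopology_iff_isUpperSet.mpr
      (isUpperSet_sInter fun U hU => isUpperSet_of_isOpen_flatTopology (hS U hU))
  · intro h
    refine noetherianSpace_of_isCompact_closure_singleton_compl fun p =>
      isCompact_closure_singleton_compl_of_isOpen_flatTopology ?_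
    rw [closure_singleton_eq_sInter_zeroLocus]
    refine h _ ?_
    rintro _ ⟨f, -, rfl⟩
    exact isOpen_generateFrom_of_mem ⟨f, rfl⟩
end
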